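/- b₂⁺(H) is an isotropic subalgebra for the imaginary part of the trace: for all b, b′ ∈ b₂⁺(H), the commutator [b, b′] = bb′ − b′b belongs to b₂⁺(H) (in particular it is trace class with real diagonal and upper triangular), and Im Tr(b b′) = 0. -/

import Mathlib

/-!
For upper triangular operators the diagonal of a product is the product of the diagonals,
so `[b, b']` has zero diagonal and every diagonal entry of `b b'` is real, whence so is
`Tr (b b')`.

For trace class, write the polar decomposition `|A| = U† A` of `A = B C - C B` with `U` bounded.
Then `⟪eₙ, |A| eₙ⟫ = ⟪B† U eₙ, C eₙ⟫ - ⟪C† U eₙ, B eₙ⟫`, and since `B† U = (U† B)†` and `C` are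
Hilbert–Schmidt, Cauchy–Schwarz bounds the diagonal of `|A|` by a summable sequence.
-/

/- Setting: `H` is a separable complex Hilbert space with a fixed orthonormal
(Hilbert) basis `e` indexed by `ℤ`. -/

set_option synthInstance.maxHeartbeats 1000000
set_option maxHeartbeats 2000000

noncomputable section
open ContinuousLinearMap

namespace PL

variable {H : Type*} [NormedAddCommGroup H] [InnerProductSpace ℂ H] [CompleteSpace H]

/-- `A` is a bounded skew-hermitian operator: `A* = -A`. -/
def SkewHerm (A : H →L[ℂ] H) : Prop := star A = -A

/-- `A` is Hilbert–Schmidt: `∑ₙ ‖A eₙ‖² < ∞` (computed in the orthonormal basis `e`;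
this is equivalent to the basis-free notion). -/
def IsHS (e : HilbertBasis ℤ ℂ H) (A : H →L[ℂ] H) : Prop :=
  Summable (fun n : ℤ => ‖A (e n)‖ ^ 2)

/-- The Hilbert–Schmidt norm `‖A‖₂`. -/
def hsNorm (e : HilbertBasis ℤ ℂ H) (A : H →L[ℂ] H) : ℝ :=
  Real.sqrt (∑' n : ℤ, ‖A (e n)‖ ^ 2)

/-- The absolute value `|A| = √(A* A)` of a bounded operator, via the continuous
functional calculus. -/
def absCLM (A : H →L[ℂ] H) : H →L[ℂ] H := CFC.sqrt (star A * A)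

/-- `A` is trace class: `Tr |A| = ∑ₙ ⟨eₙ, |A| eₙ⟩ < ∞`. -/
def IsTC (e : HilbertBasis ℤ ℂ H) (A : H →L[ℂ] H) : Prop :=
  Summable (fun n : ℤ => (inner ℂ (e n) (absCLM A (e n)) : ℂ).re)

/-- The trace norm `‖A‖₁ = Tr |A|`. -/
def traceNorm (e : HilbertBasis ℤ ℂ H) (A : H →L[ℂ] H) : ℝ :=
  ∑' n : ℤ, (inner ℂ (e n) (absCLM A (e n)) : ℂ).re

/-- The trace of a (trace-class) operator: `Tr A = ∑ₙ ⟨eₙ, A eₙ⟩`. -/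
def traceOp (e : HilbertBasis ℤ ℂ H) (A : H →L[ℂ] H) : ℂ :=
  ∑' n : ℤ, (inner ℂ (e n) (A (e n)) : ℂ)

/-- `A` is upper triangular: `⟨eₘ, A eₙ⟩ = 0` whenever `m < n`. -/
def UpperTri (e : HilbertBasis ℤ ℂ H) (A : H →L[ℂ] H) : Prop :=
  ∀ m n : ℤ, m < n → (inner ℂ (e m) (A (e n)) : ℂ) = 0

/-- All diagonal entries `⟨eₙ, A eₙ⟩` of `A` are real. -/
def RealDiag (e : HilbertBasis ℤ ℂ H) (A : H →L[ℂ] H) : Prop :=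
  ∀ n : ℤ, (inner ℂ (e n) (A (e n)) : ℂ).im = 0

/-- Membership in `b₁⁺(H)`: trace-class, upper triangular, real diagonal. -/
def InB1 (e : HilbertBasis ℤ ℂ H) (A : H →L[ℂ] H) : Prop :=
  IsTC e A ∧ UpperTri e A ∧ RealDiag e A

/-- Membership in `u₁(H)`: trace-class and skew-hermitian. -/
def InU1 (e : HilbertBasis ℤ ℂ H) (A : H →L[ℂ] H) : Prop :=
  IsTC e A ∧ SkewHerm A

/-- Membership in `b₂⁺(H)`: Hilbert–Schmidt, upper triangular, real diagonal. -/
def InB2 (e : HilbertBasis ℤ ℂ H) (A : H →L[ℂ] H) : Prop :=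
  IsHS e A ∧ UpperTri e A ∧ RealDiag e A

/-- Membership in `u₂(H)`: Hilbert–Schmidt and skew-hermitian. -/
def InU2 (e : HilbertBasis ℤ ℂ H) (A : H →L[ℂ] H) : Prop :=
  IsHS e A ∧ SkewHerm A

end PL

theorem HilbertBasis.hasSum_norm_inner_sq {ι 𝕜 E : Type*} [RCLike 𝕜] [NormedAddCommGroup E]
    [InnerProductSpace 𝕜 E] (b : HilbertBasis ι 𝕜 E) (x : E) :
    HasSum (fun i => ‖(inner 𝕜 (b i) x : 𝕜)‖ ^ 2) (‖x‖ ^ 2) := by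
  have h := b.hasSum_inner_mul_inner x x
  simp_rw [← inner_conj_symm x (b _), RCLike.conj_mul, inner_self_eq_norm_sq_to_K] at h
  exact_mod_cast (RCLike.hasSum_ofReal 𝕜).mp (by exact_mod_cast h)

theorem summable_mul_of_summable_sq {ι : Type*} {f g : ι → ℝ} (hf : Summable fun i => f i ^ 2)
    (hg : Summable fun i => g i ^ 2) : Summable fun i => f i * g i :=
  Summable.of_norm_bounded ((hf.add hg).div_const 2) fun i => by
    rw [Real.norm_eq_abs, abs_mul]
    nlinarith [two_mul_le_add_sq |f i| |g i|, sq_abs (f i), sq_abs (g i)]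

open scoped InnerProduct

namespace PL

variable {H : Type*} [NormedAddCommGroup H] [InnerProductSpace ℂ H] {e : HilbertBasis ℤ ℂ H}

lemma IsHS.sub {A B : H →L[ℂ] H} (hA : IsHS e A) (hB : IsHS e B) : IsHS e (A - B) := by
  refine Summable.of_nonneg_of_le (fun n => by positivity) (fun n => ?_) ((hA.add hB).mul_left 2)
  have := norm_sub_le (A (e n)) (B (e n))
  rw [sub_apply]
  nlinarith [sq_nonneg (‖A (e n)‖ - ‖B (e n)‖), norm_nonneg (A (e n) - B (e n))]

lemma IsHS.mul_left {B : H →L[ℂ] H} (hB : IsHS e B) (U : H →L[ℂ] H) : IsHS e (U * B) := by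
  refine Summable.of_nonneg_of_le (fun n => by positivity) (fun n => ?_)
    (Summable.mul_left (‖U‖ ^ 2) hB)
  rw [← mul_pow]
  exact pow_le_pow_left₀ (norm_nonneg _) (U.le_opNorm _) 2

lemma UpperTri.sub {A B : H →L[ℂ] H} (hA : UpperTri e A) (hB : UpperTri e B) :
    UpperTri e (A - B) := fun m n hmn => by
  rw [sub_apply, inner_sub_right, hA m n hmn, hB m n hmn, sub_zero]

lemma im_traceOp_eq_zero {A : H →L[ℂ] H} (hA : RealDiag e A) : (traceOp e A).im = 0 := by
  rw [← Complex.conj_eq_iff_im, ← Complex.star_def, traceOp, tsum_star]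
  exact tsum_congr fun n => Complex.conj_eq_iff_im.mpr (hA n)

variable [CompleteSpace H]

lemma norm_absCLM_apply (A : H →L[ℂ] H) (x : H) : ‖absCLM A x‖ = ‖A x‖ := by
  have hP : IsSelfAdjoint (absCLM A) := (CFC.sqrt_nonneg (star A * A)).isSelfAdjoint
  have hsq : (absCLM A)† ∘L absCLM A = A† ∘L A := by
    rw [← star_eq_adjoint, hP.star_eq, ← star_eq_adjoint]
    exact CFC.sqrt_mul_sqrt_self _ (star_mul_self_nonneg A)
  have h := apply_norm_sq_eq_inner_adjoint_left (absCLM A) x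
  rw [hsq, ← apply_norm_sq_eq_inner_adjoint_left] at h
  exact (pow_left_inj₀ (norm_nonneg _) (norm_nonneg _) two_ne_zero).mp h

/-- Polar decomposition: `|A| = U† A` for some bounded `U`, namely the isometry
`|A| x ↦ A x` of the closed range of `|A|` composed with the projection onto it. -/
lemma exists_adjoint_mul_eq_absCLM (A : H →L[ℂ] H) :
    ∃ U : H →L[ℂ] H, U† * A = absCLM A := by
  set K : Submodule ℂ H := (LinearMap.range (absCLM A : H →ₗ[ℂ] H)).topologicalClosure
  let j : H →ₗ[ℂ] K := (absCLM A : H →ₗ[ℂ] H).codRestrict K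
    fun x => (LinearMap.range (absCLM A : H →ₗ[ℂ] H)).le_topologicalClosure ⟨x, rfl⟩
  have hj : DenseRange j := fun z => by
    rw [Topology.IsInducing.subtypeVal.closure_eq_preimage_closure_image, Set.mem_preimage,
      ← Set.range_comp]
    exact z.2
  have hbound : ∀ x, ‖(A : H →ₗ[ℂ] H) x‖ ≤ 1 * ‖j x‖ := fun x => by
    rw [one_mul]; exact (norm_absCLM_apply A x).ge
  let V : K →L[ℂ] H := (A : H →ₗ[ℂ] H).extendOfNorm j
  have hVj : ∀ x, V (j x) = A x := LinearMap.extendOfNorm_eq hj ⟨1, hbound⟩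
  have hV : ∀ z, ‖V z‖ = ‖z‖ := fun z => by
    refine hj.induction_on z (isClosed_eq (by fun_prop) (by fun_prop)) fun x => ?_
    rw [hVj]; exact (norm_absCLM_apply A x).symm
  refine ⟨V ∘L K.orthogonalProjectionOnto, ContinuousLinearMap.ext fun x => ?_⟩
  refine ext_inner_left ℂ fun y => ?_
  have hVinner : ∀ z w, inner ℂ (V z) (V w) = inner ℂ z w :=
    (LinearMap.norm_map_iff_inner_map_map V).mp hV
  rw [mul_apply_eq_comp, adjoint_inner_right, comp_apply, ← hVj, hVinner,
    Submodule.inner_orthogonalProjectionOnto_eq_of_mem_right]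
  rfl

lemma isTC_of_forall_summable_norm_inner (A : H →L[ℂ] H)
    (h : ∀ U : H →L[ℂ] H, Summable fun n => ‖(inner ℂ (U (e n)) (A (e n)) : ℂ)‖) :
    IsTC e A := by
  obtain ⟨U, hU⟩ := exists_adjoint_mul_eq_absCLM A
  have hpos : (absCLM A).IsPositive := (nonneg_iff_isPositive _).mp (CFC.sqrt_nonneg _)
  refine Summable.of_nonneg_of_le (fun n => hpos.re_inner_nonneg_right (e n)) (fun n => ?_) (h U)
  rw [← hU, mul_apply_eq_comp, adjoint_inner_right]
  exact Complex.re_le_norm _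

lemma IsHS.adjoint {B : H →L[ℂ] H} (hB : IsHS e B) : IsHS e (B†) := by
  -- `F (m, n) = |⟪eₙ, B eₘ⟫|²` sums to `‖B eₘ‖²` over `n` and to `‖B† eₙ‖²` over `m`
  set F : ℤ × ℤ → ℝ := fun p => ‖(inner ℂ (e p.2) (B (e p.1)) : ℂ)‖ ^ 2
  have hF0 : 0 ≤ F := fun _ => by positivity
  have hrow : ∀ m, HasSum (fun n => F (m, n)) (‖B (e m)‖ ^ 2) :=
    fun m => e.hasSum_norm_inner_sq (B (e m))
  have hcol : ∀ n, HasSum (fun m => F (m, n)) (‖(B†) (e n)‖ ^ 2) := fun n => by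
    convert e.hasSum_norm_inner_sq ((B†) (e n)) using 2 with m
    rw [adjoint_inner_right, norm_inner_symm]
  have hF : Summable F := (summable_prod_of_nonneg hF0).2
    ⟨fun m => (hrow m).summable, by simp only [(hrow _).tsum_eq]; exact hB⟩
  have hcols := ((summable_prod_of_nonneg fun p => hF0 p.swap).1 hF.prod_symm).2
  simp only [Prod.swap_prod_mk, (hcol _).tsum_eq] at hcols
  exact hcols

lemma IsHS.summable_norm_inner_mul {B C : H →L[ℂ] H} (hB : IsHS e B) (hC : IsHS e C)
    (U : H →L[ℂ] H) : Summable fun n => ‖(inner ℂ (U (e n)) ((B * C) (e n)) : ℂ)‖ := by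
  have hBU : IsHS e (B† * U) := by
    simpa only [mul_def, adjoint_comp, adjoint_adjoint] using (hB.mul_left (U†)).adjoint
  refine Summable.of_nonneg_of_le (fun _ => norm_nonneg _) (fun n => ?_)
    (summable_mul_of_summable_sq hBU hC)
  rw [mul_apply_eq_comp, mul_apply_eq_comp, ← adjoint_inner_left]
  exact norm_inner_le_norm _ _

lemma IsHS.isTC_commutator {B C : H →L[ℂ] H} (hB : IsHS e B) (hC : IsHS e C) :
    IsTC e (B * C - C * B) := isTC_of_forall_summable_norm_inner _ fun U => by
  refine Summable.of_nonneg_of_le (fun _ => norm_nonneg _) (fun n => ?_)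
    ((hB.summable_norm_inner_mul hC U).add (hC.summable_norm_inner_mul hB U))
  rw [sub_apply, inner_sub_right]
  exact norm_sub_le _ _

lemma inner_mul_apply_eq_tsum (B C : H →L[ℂ] H) (m n : ℤ) :
    (inner ℂ (e m) ((B * C) (e n)) : ℂ)
      = ∑' k, (inner ℂ (e m) (B (e k)) : ℂ) * inner ℂ (e k) (C (e n)) := by
  rw [mul_apply_eq_comp, ← adjoint_inner_left, ← e.tsum_inner_mul_inner]
  simp_rw [adjoint_inner_left]

lemma UpperTri.mul {B C : H →L[ℂ] H} (hB : UpperTri e B) (hC : UpperTri e C) :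
    UpperTri e (B * C) := fun m n hmn => by
  rw [inner_mul_apply_eq_tsum]
  refine (tsum_congr fun k => ?_).trans tsum_zero
  rcases le_or_gt k m with hkm | hmk
  · rw [hC k n (hkm.trans_lt hmn), mul_zero]
  · rw [hB m k hmk, zero_mul]

lemma UpperTri.inner_mul_apply_self {B C : H →L[ℂ] H} (hB : UpperTri e B)
    (hC : UpperTri e C) (n : ℤ) : (inner ℂ (e n) ((B * C) (e n)) : ℂ)
      = inner ℂ (e n) (B (e n)) * inner ℂ (e n) (C (e n)) := by
  rw [inner_mul_apply_eq_tsum]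
  refine tsum_eq_single n fun k hk => ?_
  rcases hk.lt_or_gt with hkn | hnk
  · rw [hC k n hkn, mul_zero]
  · rw [hB n k hnk, zero_mul]

lemma RealDiag.mul {B C : H →L[ℂ] H} (hBu : UpperTri e B) (hCu : UpperTri e C)
    (hB : RealDiag e B) (hC : RealDiag e C) : RealDiag e (B * C) := fun n => by
  rw [hBu.inner_mul_apply_self hCu, Complex.mul_im, hB n, hC n, mul_zero, zero_mul, add_zero]

lemma UpperTri.realDiag_commutator {B C : H →L[ℂ] H} (hB : UpperTri e B) (hC : UpperTri e C) :
    RealDiag e (B * C - C * B) := fun n => by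
  rw [sub_apply, inner_sub_right, hB.inner_mul_apply_self hC, hC.inner_mul_apply_self hB,
    mul_comm, sub_self, Complex.zero_im]

/-- `b₂⁺(H)` is an isotropic subalgebra for the imaginary part of the
trace: for `b, b′ ∈ b₂⁺(H)` the commutator `[b, b′] = b b′ − b′ b` belongs to `b₂⁺(H)`
and is in particular trace class, upper triangular with real diagonal, and moreover
`Im Tr(b b′) = 0`. -/
theorem statement_11 {H : Type*} [NormedAddCommGroup H] [InnerProductSpace ℂ H]
    [CompleteSpace H] (e : HilbertBasis ℤ ℂ H)
    (b b' : H →L[ℂ] H) (hb : InB2 e b) (hb' : InB2 e b') :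
    InB2 e (b * b' - b' * b) ∧ IsTC e (b * b' - b' * b) ∧
    UpperTri e (b * b' - b' * b) ∧ RealDiag e (b * b' - b' * b) ∧
    (traceOp e (b * b')).im = 0 := by
  obtain ⟨hbHS, hbU, hbD⟩ := hb
  obtain ⟨hb'HS, hb'U, hb'D⟩ := hb'
  have hUT : UpperTri e (b * b' - b' * b) := (hbU.mul hb'U).sub (hb'U.mul hbU)
  have hRD : RealDiag e (b * b' - b' * b) := hbU.realDiag_commutator hb'U
  have hHS : IsHS e (b * b' - b' * b) := (hb'HS.mul_left b).sub (hbHS.mul_left b')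
  have hTC : IsTC e (b * b' - b' * b) := hbHS.isTC_commutator hb'HS
  exact ⟨⟨hHS, hUT, hRD⟩, hTC, hUT, hRD, im_traceOp_eq_zero (hbD.mul hbU hb'U hb'D)⟩

end PL
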